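/- Assume XᵀX is invertible, fix j ∈ Fin p, let η_j = X·(XᵀX)⁻¹·e_j and c_j = η_j/‖η_j‖₂², fix ν ∈ ℝ^n, penalties λ > 0 and λ_high > 0, and a set H ⊆ Fin p. For z ∈ ℝ let β̂_λ(z) and β̂_high(z) be the unique lasso solutions for (X, ν + z·c_j, λ) and (X, ν + z·c_j, λ_high) respectively. Then there exist real numbers a ≤ b and order-connected sets I_1, …, I_m ⊆ ℝ with m ≤ 2^{|H|} such that {z ∈ ℝ : β̂_λ(z)_j ≠ 0 and the active set of β̂_high(z) equals H} = ((−∞, a) ∪ (b, ∞)) ∩ (I_1 ∪ ⋯ ∪ I_m). -/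

import Mathlib

open scoped BigOperators

/-- The lasso objective `f_{X,y,λ}(β) = (1/2)‖y − Xβ‖₂² + λ∑|β_j|`. -/
noncomputable def lassoObj {n : ℕ} {κ : Type*} [Fintype κ]
    (X : Matrix (Fin n) κ ℝ) (y : Fin n → ℝ) (lam : ℝ) (β : κ → ℝ) : ℝ :=
  (1 / 2) * ∑ i, (y i - X.mulVec β i) ^ 2 + lam * ∑ j, |β j|

/-- A lasso solution is a global minimizer of the lasso objective. -/
def IsLassoSolution {n : ℕ} {κ : Type*} [Fintype κ]
    (X : Matrix (Fin n) κ ℝ) (y : Fin n → ℝ) (lam : ℝ) (βhat : κ → ℝ) : Prop :=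
  ∀ β : κ → ℝ, lassoObj X y lam βhat ≤ lassoObj X y lam β

/-!
Along the line `y(z) = ν + z c` everything follows from the KKT conditions of the lasso.
They make the fit `y ↦ X β̂(y)` firmly nonexpansive; as `c` is normalized so that
`⟨c, X v⟩ = ‖c‖² v_j`, this makes `z ↦ β̂_λ(z)_j` nondecreasing and 1-Lipschitz, and the
KKT bound `|Xᵀ(y - Xβ̂)| ≤ λ` keeps it within bounded distance of `z`. Hence its zero set is a
compact interval `[a, b]`. On the other hand, KKT points with a common sign vector stay KKT points
under convex combinations of both `y` and `β`, so by uniqueness the set of `z` on which `β̂_high(z)`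
has a prescribed sign vector is an interval; the active set is `H` exactly on the union of the
`2^|H|` such sets for the sign vectors supported on `H`.
-/

open Set Filter Topology Matrix

lemma nonpos_of_forall_mul_le_sq_mul {x C δ : ℝ} (hδ : 0 < δ)
    (h : ∀ t ∈ Ioo 0 δ, t * x ≤ t ^ 2 * C) : x ≤ 0 := by
  have hlim : Tendsto (fun t : ℝ => t * C) (𝓝[>] 0) (𝓝 0) := by
    simpa using tendsto_nhdsWithin_of_tendsto_nhds ((tendsto_id (x := 𝓝 (0 : ℝ))).mul_const C)
  refine ge_of_tendsto hlim ?_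
  filter_upwards [Ioo_mem_nhdsGT hδ] with t ht
  have := h t ht
  nlinarith [ht.1]

lemma sign_combo {a b u₀ u₁ : ℝ} (ha : 0 ≤ a) (hb : 0 ≤ b) (hab : a + b = 1)
    (hs : SignType.sign u₀ = SignType.sign u₁) :
    SignType.sign (a * u₀ + b * u₁) = SignType.sign u₀ := by
  rcases lt_trichotomy u₀ 0 with h | h | h
  · have h₁ : u₁ < 0 := by rwa [sign_neg h, eq_comm, sign_eq_neg_one_iff] at hs
    rw [sign_neg h, sign_neg]
    nlinarith [mul_le_mul_of_nonneg_left (le_max_left u₀ u₁) ha,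
      mul_le_mul_of_nonneg_left (le_max_right u₀ u₁) hb, max_lt h h₁]
  · rw [h, sign_zero, eq_comm, sign_eq_zero_iff] at hs
    simp [h, hs]
  · have h₁ : 0 < u₁ := by rwa [sign_pos h, eq_comm, sign_eq_one_iff] at hs
    rw [sign_pos h, sign_pos]
    nlinarith [mul_le_mul_of_nonneg_left (min_le_left u₀ u₁) ha,
      mul_le_mul_of_nonneg_left (min_le_right u₀ u₁) hb, lt_min h h₁]

/-- `g` is a subgradient of `u ↦ lam * |u|` at `u`. -/
def IsAbsSubgrad (lam u g : ℝ) : Prop :=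
  |g| ≤ lam ∧ (u ≠ 0 → g = lam * SignType.sign u)

namespace IsAbsSubgrad

variable {lam u g : ℝ}

lemma mul_le (h : IsAbsSubgrad lam u g) (v : ℝ) : g * v ≤ lam * |v| :=
  (le_abs_self _).trans (abs_mul g v ▸ mul_le_mul_of_nonneg_right h.1 (abs_nonneg v))

lemma mul_self (h : IsAbsSubgrad lam u g) : g * u = lam * |u| := by
  rcases eq_or_ne u 0 with rfl | hu
  · simp
  · rw [h.2 hu, mul_assoc, sign_mul_self]

lemma combo {u₀ u₁ g₀ g₁ a b : ℝ} (h₀ : IsAbsSubgrad lam u₀ g₀) (h₁ : IsAbsSubgrad lam u₁ g₁)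
    (hs : SignType.sign u₀ = SignType.sign u₁) (ha : 0 ≤ a) (hb : 0 ≤ b) (hab : a + b = 1) :
    IsAbsSubgrad lam (a * u₀ + b * u₁) (a * g₀ + b * g₁) := by
  have hsign := sign_combo ha hb hab hs
  refine ⟨?_, fun hu => ?_⟩
  · calc |a * g₀ + b * g₁| ≤ a * |g₀| + b * |g₁| := by
          simpa [abs_mul, abs_of_nonneg ha, abs_of_nonneg hb] using abs_add_le (a * g₀) (b * g₁)
      _ ≤ a * lam + b * lam := by gcongr; exacts [h₀.1, h₁.1]
      _ = lam := by rw [← add_mul, hab, one_mul]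
  · have hu₀ : u₀ ≠ 0 := sign_ne_zero.1 (hsign ▸ sign_ne_zero.2 hu)
    have hu₁ : u₁ ≠ 0 := sign_ne_zero.1 (hs ▸ sign_ne_zero.2 hu₀)
    rw [hsign, h₀.2 hu₀, h₁.2 hu₁, ← hs]
    linear_combination (lam * SignType.sign u₀) * hab

end IsAbsSubgrad

/-- `h` says that `t ↦ A t² - g t + lam * |u + t|` is minimal at `t = 0`. -/
lemma isAbsSubgrad_of_forall {lam u g A : ℝ} (hlam : 0 ≤ lam)
    (h : ∀ t, t * g ≤ t ^ 2 * A + lam * (|u + t| - |u|)) : IsAbsSubgrad lam u g := by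
  have upper : g - lam ≤ 0 := nonpos_of_forall_mul_le_sq_mul (C := A) one_pos fun t ht => by
    have hu : |u + t| - |u| ≤ t := by linarith [abs_add_le u t, abs_of_pos ht.1]
    nlinarith [h t, mul_le_mul_of_nonneg_left hu hlam]
  have lower : -g - lam ≤ 0 := nonpos_of_forall_mul_le_sq_mul (C := A) one_pos fun t ht => by
    have hu : |u + -t| - |u| ≤ t := by linarith [abs_add_le u (-t), abs_neg t, abs_of_pos ht.1]
    nlinarith [h (-t), mul_le_mul_of_nonneg_left hu hlam]
  refine ⟨abs_le.2 ⟨by linarith, by linarith⟩, fun hu => ?_⟩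
  rcases hu.lt_or_gt with hu | hu
  · have : g + lam ≤ 0 := nonpos_of_forall_mul_le_sq_mul (C := A) (neg_pos.2 hu) fun t ht => by
      have := h t
      rw [abs_of_neg hu, abs_of_neg (by linarith [ht.2] : u + t < 0)] at this
      linarith
    rw [sign_neg hu, SignType.coe_neg_one]
    linarith
  · have : lam - g ≤ 0 := nonpos_of_forall_mul_le_sq_mul (C := A) hu fun t ht => by
      have := h (-t)
      rw [abs_of_pos hu, abs_of_pos (by linarith [ht.2] : 0 < u + -t)] at this
      linarith
    rw [sign_pos hu, SignType.coe_one]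
    linarith

lemma exists_setOf_ne_zero_eq_Iio_union_Ioi {f : ℝ → ℝ} (hmono : Monotone f)
    (hcont : Continuous f) {zneg zpos : ℝ} (hneg : f zneg < 0) (hpos : 0 < f zpos) :
    ∃ a b, a ≤ b ∧ {z | f z ≠ 0} = Iio a ∪ Ioi b := by
  set Z := f ⁻¹' {0}
  have hZ : Z.Nonempty := intermediate_value_univ zneg zpos hcont ⟨hneg.le, hpos.le⟩
  have hbelow : BddBelow Z := ⟨zneg, fun z (hz : f z = 0) =>
    le_of_not_gt fun h => (hmono h.le).not_gt (hz ▸ hneg)⟩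
  have habove : BddAbove Z := ⟨zpos, fun z (hz : f z = 0) =>
    le_of_not_gt fun h => (hmono h.le).not_gt (hz ▸ hpos)⟩
  have hclosed : IsClosed Z := isClosed_singleton.preimage hcont
  have ha : f (sInf Z) = 0 := hclosed.csInf_mem hZ hbelow
  have hb : f (sSup Z) = 0 := hclosed.csSup_mem hZ habove
  refine ⟨sInf Z, sSup Z, csInf_le_csSup hZ hbelow habove, ?_⟩
  ext z
  simp only [mem_ofPred_eq, mem_union, mem_Iio, mem_Ioi]
  constructor
  · intro hz
    by_contra! h
    exact hz (le_antisymm (hb ▸ hmono h.2) (ha ▸ hmono h.1))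
  · rintro (h | h) hz
    · exact h.not_ge (csInf_le hbelow hz)
    · exact h.not_ge (le_csSup habove hz)

section SignPattern

variable {α κ : Type*} [DecidableEq κ]

def signPattern (H s : Finset κ) : κ → SignType :=
  fun k => if k ∈ s then 1 else if k ∈ H then -1 else 0

lemma setOf_support_eq_biUnion_signPattern (f : α → κ → ℝ) (H : Finset κ) :
    {z | {k | f z k ≠ 0} = (H : Set κ)}
      = ⋃ s ∈ H.powerset, {z | ∀ k, SignType.sign (f z k) = signPattern H s k} := by
  ext z
  simp only [mem_ofPred_eq, mem_iUnion, Finset.mem_powerset, exists_prop]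
  constructor
  · intro hz
    have hH k : f z k ≠ 0 ↔ k ∈ H := by simpa using Set.ext_iff.1 hz k
    refine ⟨H.filter (0 < f z ·), Finset.filter_subset _ _, fun k => ?_⟩
    simp only [signPattern, Finset.mem_filter]
    split_ifs with hpos hk
    · exact sign_pos hpos.2
    · exact sign_neg (lt_of_le_of_ne (not_lt.1 fun h => hpos ⟨hk, h⟩) ((hH k).2 hk))
    · exact sign_eq_zero_iff.2 (not_not.1 fun h => hk ((hH k).1 h))
  · rintro ⟨s, hsH, hs⟩
    ext k
    change f z k ≠ 0 ↔ k ∈ H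
    rw [← sign_ne_zero, hs k, signPattern]
    split_ifs with h₁ h₂
    · simp [hsH h₁]
    · simp [h₂]
    · simp [h₂]

lemma exists_ordConnected_iUnion_eq_setOf_support [Preorder α] (f : α → κ → ℝ)
    (hf : ∀ σ : κ → SignType, {z | ∀ k, SignType.sign (f z k) = σ k}.OrdConnected)
    (H : Finset κ) :
    ∃ m ≤ 2 ^ H.card, ∃ I : Fin m → Set α, (∀ i, (I i).OrdConnected) ∧
      {z | {k | f z k ≠ 0} = (H : Set κ)} = ⋃ i, I i := by
  set B : Finset κ → Set α := fun s => {z | ∀ k, SignType.sign (f z k) = signPattern H s k}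
  refine ⟨_, (Finset.card_powerset H).le, fun i => B (H.powerset.equivFin.symm i),
    fun i => hf _, ?_⟩
  rw [setOf_support_eq_biUnion_signPattern]
  exact ((Equiv.iSup_comp (g := fun s : H.powerset => B s) _).trans (iUnion_subtype _ _)).symm

end SignPattern

section Lasso

variable {n : ℕ} {κ : Type*} [Fintype κ] (X : Matrix (Fin n) κ ℝ)

lemma dotProduct_sq_le_dotProduct_self_mul {ι : Type*} [Fintype ι] (v w : ι → ℝ) :
    (v ⬝ᵥ w) ^ 2 ≤ (v ⬝ᵥ v) * (w ⬝ᵥ w) := by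
  simpa only [dotProduct, ← sq] using Finset.sum_mul_sq_le_sq_mul_sq Finset.univ v w

lemma dotProduct_mulVec_eq_transpose (v : Fin n → ℝ) (w : κ → ℝ) :
    v ⬝ᵥ X *ᵥ w = (Xᵀ *ᵥ v) ⬝ᵥ w := by
  rw [dotProduct_mulVec, mulVec_transpose]

/-- The conditions `Xᵀ (y - X β) ∈ lam · ∂‖β‖₁`. -/
def IsLassoKKT (y : Fin n → ℝ) (lam : ℝ) (β : κ → ℝ) : Prop :=
  ∀ k, IsAbsSubgrad lam (β k) ((Xᵀ *ᵥ (y - X *ᵥ β)) k)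

lemma lassoObj_add (y : Fin n → ℝ) (lam : ℝ) (β δ : κ → ℝ) :
    lassoObj X y lam (β + δ) = lassoObj X y lam β - (Xᵀ *ᵥ (y - X *ᵥ β)) ⬝ᵥ δ
      + (1 / 2) * (X *ᵥ δ ⬝ᵥ X *ᵥ δ) + lam * ∑ k, (|β k + δ k| - |β k|) := by
  have hquad : ∑ i, (y i - (X *ᵥ (β + δ)) i) ^ 2
      = ∑ i, (y i - (X *ᵥ β) i) ^ 2 - 2 * ((y - X *ᵥ β) ⬝ᵥ X *ᵥ δ) + X *ᵥ δ ⬝ᵥ X *ᵥ δ := by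
    simp only [mulVec_add, dotProduct, Pi.add_apply, Pi.sub_apply, Finset.mul_sum,
      ← Finset.sum_sub_distrib, ← Finset.sum_add_distrib]
    exact Finset.sum_congr rfl fun i _ => by ring
  have habs : ∑ k, |(β + δ) k| = ∑ k, |β k| + ∑ k, (|β k + δ k| - |β k|) := by
    simp [Finset.sum_sub_distrib]
  rw [← dotProduct_mulVec_eq_transpose]
  unfold lassoObj
  rw [hquad, habs]
  ring

variable {X}

lemma IsLassoSolution.isLassoKKT [DecidableEq κ] {y : Fin n → ℝ} {lam : ℝ} {β : κ → ℝ}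
    (hlam : 0 ≤ lam) (h : IsLassoSolution X y lam β) : IsLassoKKT X y lam β := by
  intro k
  refine isAbsSubgrad_of_forall (A := (1 / 2) * (X *ᵥ Pi.single k 1 ⬝ᵥ X *ᵥ Pi.single k 1))
    hlam fun t => ?_
  have hmin := h (β + t • Pi.single k 1)
  have habs : ∑ l, (|β l + (t • Pi.single k (1 : ℝ)) l| - |β l|) = |β k + t| - |β k| := by
    rw [Finset.sum_eq_single k (fun l _ hl => by simp [hl]) (by simp)]
    simp
  rw [lassoObj_add, habs] at hmin
  simp only [mulVec_smul, dotProduct_smul, smul_dotProduct, dotProduct_single, smul_eq_mul,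
    mul_one] at hmin
  nlinarith [hmin]

lemma IsLassoKKT.isLassoSolution {y : Fin n → ℝ} {lam : ℝ} {β : κ → ℝ}
    (h : IsLassoKKT X y lam β) : IsLassoSolution X y lam β := by
  intro β'
  have hexp := lassoObj_add X y lam β (β' - β)
  rw [add_sub_cancel] at hexp
  have hlin : (Xᵀ *ᵥ (y - X *ᵥ β)) ⬝ᵥ (β' - β) ≤ lam * ∑ k, (|β k + (β' - β) k| - |β k|) := by
    simp only [dotProduct, Pi.sub_apply, add_sub_cancel, Finset.mul_sum]
    refine Finset.sum_le_sum fun k _ => ?_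
    linarith [(h k).mul_le (β' k), (h k).mul_self, mul_sub ((Xᵀ *ᵥ (y - X *ᵥ β)) k) (β' k) (β k)]
  have hquad : 0 ≤ X *ᵥ (β' - β) ⬝ᵥ X *ᵥ (β' - β) := Finset.sum_nonneg fun i _ => mul_self_nonneg _
  linarith

lemma isLassoSolution_iff_isLassoKKT [DecidableEq κ] {y : Fin n → ℝ} {lam : ℝ} {β : κ → ℝ}
    (hlam : 0 ≤ lam) : IsLassoSolution X y lam β ↔ IsLassoKKT X y lam β :=
  ⟨IsLassoSolution.isLassoKKT hlam, IsLassoKKT.isLassoSolution⟩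

end Lasso

section KKT

variable {n : ℕ} {κ : Type*} [Fintype κ] {X : Matrix (Fin n) κ ℝ} {lam : ℝ}

lemma IsLassoKKT.abs_mulVec_dotProduct_residual_le {y : Fin n → ℝ} {β : κ → ℝ}
    (h : IsLassoKKT X y lam β) (w : κ → ℝ) :
    |X *ᵥ w ⬝ᵥ (y - X *ᵥ β)| ≤ lam * ∑ k, |w k| := by
  rw [dotProduct_comm, dotProduct_mulVec_eq_transpose, Finset.mul_sum]
  refine (Finset.abs_sum_le_sum_abs _ _).trans (Finset.sum_le_sum fun k _ => ?_)
  rw [abs_mul]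
  exact mul_le_mul_of_nonneg_right (h k).1 (abs_nonneg _)

/-- Firm nonexpansiveness of the lasso fit `y ↦ X β̂(y)`, from monotonicity of `∂‖·‖₁`. -/
lemma IsLassoKKT.mulVec_sub_dotProduct_self_le {y y' : Fin n → ℝ} {β β' : κ → ℝ}
    (h : IsLassoKKT X y lam β) (h' : IsLassoKKT X y' lam β') :
    X *ᵥ (β' - β) ⬝ᵥ X *ᵥ (β' - β) ≤ (y' - y) ⬝ᵥ X *ᵥ (β' - β) := by
  set g := Xᵀ *ᵥ (y - X *ᵥ β)
  set g' := Xᵀ *ᵥ (y' - X *ᵥ β')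
  have hmono : 0 ≤ (g' - g) ⬝ᵥ (β' - β) := Finset.sum_nonneg fun k _ => by
    simp only [Pi.sub_apply]
    linarith [(h' k).mul_self, (h' k).mul_le (β k), (h k).mul_self, (h k).mul_le (β' k),
      sub_mul (g' k) (g k) (β' k - β k), mul_sub (g' k) (β' k) (β k), mul_sub (g k) (β' k) (β k)]
  have hres : g' - g = Xᵀ *ᵥ ((y' - y) - X *ᵥ (β' - β)) := by
    simp only [g, g', mulVec_sub]
    abel
  rw [hres, ← dotProduct_mulVec_eq_transpose, sub_dotProduct] at hmono
  linarith

lemma IsLassoKKT.combo {y₀ y₁ : Fin n → ℝ} {β₀ β₁ : κ → ℝ} {a b : ℝ}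
    (h₀ : IsLassoKKT X y₀ lam β₀) (h₁ : IsLassoKKT X y₁ lam β₁)
    (hs : ∀ k, SignType.sign (β₀ k) = SignType.sign (β₁ k)) (ha : 0 ≤ a) (hb : 0 ≤ b)
    (hab : a + b = 1) : IsLassoKKT X (a • y₀ + b • y₁) lam (a • β₀ + b • β₁) := by
  intro k
  have hgrad : Xᵀ *ᵥ (a • y₀ + b • y₁ - X *ᵥ (a • β₀ + b • β₁))
      = a • Xᵀ *ᵥ (y₀ - X *ᵥ β₀) + b • Xᵀ *ᵥ (y₁ - X *ᵥ β₁) := by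
    simp only [mulVec_add, mulVec_smul, mulVec_sub, smul_sub]
    abel
  rw [hgrad]
  exact (h₀ k).combo (h₁ k) (hs k) ha hb hab

end KKT

lemma transpose_mulVec_normalized {n : ℕ} {κ : Type*} [DecidableEq κ] (X : Matrix (Fin n) κ ℝ)
    {j : κ} {η c : Fin n → ℝ} (hη : Xᵀ *ᵥ η = Pi.single j 1) (hc : c = (∑ i, η i ^ 2)⁻¹ • η) :
    Xᵀ *ᵥ c = (c ⬝ᵥ c) • Pi.single j 1 ∧ c ≠ 0 := by
  have hη0 : η ≠ 0 := by
    rintro rfl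
    simpa using congrFun hη j
  have hS : ∑ i, η i ^ 2 = η ⬝ᵥ η := by simp [dotProduct, sq]
  have hpos : 0 < η ⬝ᵥ η := by simpa using dotProduct_star_self_pos_iff.2 hη0
  subst hc
  rw [hS, mulVec_smul, hη, smul_dotProduct, dotProduct_smul, smul_eq_mul, smul_eq_mul]
  refine ⟨by congr 1; field_simp, smul_ne_zero (inv_ne_zero hpos.ne') hη0⟩

section LassoPath

variable {n : ℕ} {κ : Type*} [Fintype κ] [DecidableEq κ] (X : Matrix (Fin n) κ ℝ) {lam : ℝ}
  {ν c : Fin n → ℝ}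

lemma ordConnected_setOf_sign_lassoPath (hlam : 0 ≤ lam) {β : ℝ → κ → ℝ}
    (hβ : ∀ z, IsLassoSolution X (ν + z • c) lam (β z) ∧
      ∀ β', IsLassoSolution X (ν + z • c) lam β' → β' = β z)
    (σ : κ → SignType) : {z | ∀ k, SignType.sign (β z k) = σ k}.OrdConnected := by
  refine ⟨fun z₀ h₀ z₁ h₁ z hz => ?_⟩
  rw [← segment_eq_Icc (hz.1.trans hz.2)] at hz
  obtain ⟨a, b, ha, hb, hab, rfl⟩ := hz
  have hs k : SignType.sign (β z₀ k) = SignType.sign (β z₁ k) := (h₀ k).trans (h₁ k).symm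
  have hkkt := ((hβ z₀).1.isLassoKKT hlam).combo ((hβ z₁).1.isLassoKKT hlam) hs ha hb hab
  have hy : a • (ν + z₀ • c) + b • (ν + z₁ • c) = ν + (a • z₀ + b • z₁) • c := by
    ext i
    simp only [Pi.add_apply, Pi.smul_apply, smul_eq_mul]
    linear_combination ν i * hab
  rw [hy] at hkkt
  intro k
  rw [← (hβ _).2 _ hkkt.isLassoSolution, Pi.add_apply, Pi.smul_apply, Pi.smul_apply,
    smul_eq_mul, smul_eq_mul, sign_combo ha hb hab (hs k), h₀ k]

variable {j : κ}

lemma dotProduct_mulVec_of_transpose_mulVec {s : ℝ} (hc : Xᵀ *ᵥ c = s • Pi.single j 1)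
    (v : κ → ℝ) : c ⬝ᵥ X *ᵥ v = s * v j := by
  rw [dotProduct_mulVec_eq_transpose, hc, smul_dotProduct, single_dotProduct, one_mul,
    smul_eq_mul]

lemma lassoPath_coord_le (hlam : 0 ≤ lam) (hc : Xᵀ *ᵥ c = (c ⬝ᵥ c) • Pi.single j 1)
    (hc0 : c ≠ 0) {z z' : ℝ} (hzz : z ≤ z') {β β' : κ → ℝ}
    (h : IsLassoSolution X (ν + z • c) lam β) (h' : IsLassoSolution X (ν + z' • c) lam β') :
    β j ≤ β' j ∧ β' j ≤ β j + (z' - z) := by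
  have hs : 0 < c ⬝ᵥ c := by simpa using dotProduct_star_self_pos_iff.2 hc0
  have hcΔ := dotProduct_mulVec_of_transpose_mulVec X hc (β' - β)
  have hfirm := (h.isLassoKKT hlam).mulVec_sub_dotProduct_self_le (h'.isLassoKKT hlam)
  rw [add_sub_add_left_eq_sub, ← sub_smul, smul_dotProduct, hcΔ, smul_eq_mul] at hfirm
  have hCS := dotProduct_sq_le_dotProduct_self_mul c (X *ᵥ (β' - β))
  rw [hcΔ] at hCS
  have hkey : (β' j - β j) ^ 2 ≤ (z' - z) * (β' j - β j) := by
    simp only [Pi.sub_apply] at hCS hfirm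
    refine le_of_mul_le_mul_left ?_ (pow_pos hs 2)
    calc (c ⬝ᵥ c) ^ 2 * (β' j - β j) ^ 2 = (c ⬝ᵥ c * (β' j - β j)) ^ 2 := by ring
      _ ≤ c ⬝ᵥ c * ((z' - z) * (c ⬝ᵥ c * (β' j - β j))) :=
        hCS.trans (mul_le_mul_of_nonneg_left hfirm hs.le)
      _ = (c ⬝ᵥ c) ^ 2 * ((z' - z) * (β' j - β j)) := by ring
  constructor <;> nlinarith

lemma abs_lassoPath_coord_sub_le (hlam : 0 ≤ lam) (hc : Xᵀ *ᵥ c = (c ⬝ᵥ c) • Pi.single j 1)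
    {w : κ → ℝ} (hcw : c = X *ᵥ w) {z : ℝ} {β : κ → ℝ}
    (h : IsLassoSolution X (ν + z • c) lam β) :
    |c ⬝ᵥ ν + (c ⬝ᵥ c) * (z - β j)| ≤ lam * ∑ k, |w k| := by
  have := (h.isLassoKKT hlam).abs_mulVec_dotProduct_residual_le w
  rw [← hcw, dotProduct_sub, dotProduct_add, dotProduct_smul,
    dotProduct_mulVec_of_transpose_mulVec X hc, smul_eq_mul] at this
  convert this using 2
  ring

lemma exists_setOf_lassoPath_coord_ne_zero_eq (hlam : 0 ≤ lam)
    (hc : Xᵀ *ᵥ c = (c ⬝ᵥ c) • Pi.single j 1) (hc0 : c ≠ 0) {w : κ → ℝ} (hcw : c = X *ᵥ w)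
    {β : ℝ → κ → ℝ} (hβ : ∀ z, IsLassoSolution X (ν + z • c) lam (β z)) :
    ∃ a b, a ≤ b ∧ {z | β z j ≠ 0} = Iio a ∪ Ioi b := by
  have hs : 0 < c ⬝ᵥ c := by simpa using dotProduct_star_self_pos_iff.2 hc0
  have hle {z z'} (hzz : z ≤ z') := lassoPath_coord_le X hlam hc hc0 hzz (hβ z) (hβ z')
  have hbound z := abs_le.1 (abs_lassoPath_coord_sub_le X hlam hc hcw (hβ z))
  set E := c ⬝ᵥ ν
  set L := lam * ∑ k, |w k|
  refine exists_setOf_ne_zero_eq_Iio_union_Ioi (fun z z' hzz => (hle hzz).1) ?_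
    (zneg := (-E - L - 1) / (c ⬝ᵥ c)) (zpos := (L - E + 1) / (c ⬝ᵥ c)) ?_ ?_
  · refine (LipschitzWith.of_le_add_mul' 1 fun z z' => ?_).continuous
    rw [Real.dist_eq, one_mul]
    rcases le_total z z' with hzz | hzz
    · linarith [(hle hzz).1, abs_nonneg (z - z')]
    · linarith [(hle hzz).2, le_abs_self (z - z')]
  · have := (hbound ((-E - L - 1) / (c ⬝ᵥ c))).1
    rw [mul_sub, mul_div_cancel₀ _ hs.ne'] at this
    nlinarith
  · have := (hbound ((L - E + 1) / (c ⬝ᵥ c))).2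
    rw [mul_sub, mul_div_cancel₀ _ hs.ne'] at this
    nlinarith

end LassoPath

/-- Truncation set for the stable-ℓ₁ method: the event `{j ∈ M̂(z)} ∩ {Ĥ(z) = H}`
along the line `z ↦ ν + z·c_j` has the form
`((−∞,a) ∪ (b,∞)) ∩ (I_1 ∪ ⋯ ∪ I_m)` with `a ≤ b` and `m ≤ 2^{|H|}` intervals. -/
theorem stable_l1_truncation_set {n p : ℕ} (X : Matrix (Fin n) (Fin p) ℝ)
    (lam lamHigh : ℝ) (hlam : 0 < lam) (hlamHigh : 0 < lamHigh)
    (hinv : IsUnit (X.transpose * X)) (j : Fin p)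
    (η : Fin n → ℝ)
    (hη : η = X.mulVec ((X.transpose * X)⁻¹.mulVec (Pi.single j 1)))
    (c : Fin n → ℝ) (hc : c = (∑ i, η i ^ 2)⁻¹ • η)
    (ν : Fin n → ℝ) (H : Finset (Fin p))
    (βlam βhigh : ℝ → Fin p → ℝ)
    (hβlam : ∀ z : ℝ, IsLassoSolution X (ν + z • c) lam (βlam z) ∧
      ∀ β : Fin p → ℝ, IsLassoSolution X (ν + z • c) lam β → β = βlam z)
    (hβhigh : ∀ z : ℝ, IsLassoSolution X (ν + z • c) lamHigh (βhigh z) ∧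
      ∀ β : Fin p → ℝ, IsLassoSolution X (ν + z • c) lamHigh β → β = βhigh z) :
    ∃ a b : ℝ, a ≤ b ∧ ∃ m ≤ 2 ^ H.card, ∃ I : Fin m → Set ℝ,
      (∀ i, (I i).OrdConnected) ∧
      {z : ℝ | βlam z j ≠ 0 ∧ {k | βhigh z k ≠ 0} = (H : Set (Fin p))}
        = (Set.Iio a ∪ Set.Ioi b) ∩ ⋃ i, I i := by
  have hXη : Xᵀ *ᵥ η = Pi.single j 1 := by
    rw [hη, mulVec_mulVec, mulVec_mulVec,
      mul_nonsing_inv _ ((isUnit_iff_isUnit_det _).1 hinv), one_mulVec]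
  obtain ⟨hXc, hc0⟩ := transpose_mulVec_normalized X hXη hc
  have hcw : c = X *ᵥ ((∑ i, η i ^ 2)⁻¹ • (Xᵀ * X)⁻¹ *ᵥ Pi.single j 1) := by
    rw [hc, hη, mulVec_smul]
  obtain ⟨a, b, hab, hlamSet⟩ := exists_setOf_lassoPath_coord_ne_zero_eq X hlam.le hXc hc0 hcw
    fun z => (hβlam z).1
  obtain ⟨m, hm, I, hI, hhighSet⟩ := exists_ordConnected_iUnion_eq_setOf_support βhigh
    (ordConnected_setOf_sign_lassoPath X hlamHigh.le hβhigh) H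
  exact ⟨a, b, hab, m, hm, I, hI, by rw [ofPred_and, hlamSet, hhighSet]⟩
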